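/- arXiv:1011.0826 — 2 statements merged into one kernel-verified Lean document; each statement's English description precedes it below -/
import Mathlib

section
/- Let φ̃ : ℝ² → ℝ be C² and let E = −∇φ̃. Define the vector field A(x₁, x₂, k, α) = (E₂, −E₁, √(2k)(E₁ cos α + E₂ sin α), (E₂ cos α − E₁ sin α)/√(2k)) where E is evaluated at (x₁ − √(2k) sin α, x₂ + √(2k) cos α). Then A is divergence-free on ℝ² × (0, ∞) × ℝ: ∂_{x₁}A₁ + ∂_{x₂}A₂ + ∂_k A₃ + ∂_α A₄ = 0. -/
/-!
Write `p` for the gyrocenter point `(x₁ - √(2k) sin α, x₂ + √(2k) cos α)`, `H` for the Hessian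
of `φ` at `p`, `w = (cos α, sin α)` and `w⊥ = (-sin α, cos α)`. Then `A₃ = -√(2k) Dφ(p) w` and
`A₄ = -Dφ(p) w⊥ / √(2k)`. The chain rule gives `∂_{x₁}A₁ + ∂_{x₂}A₂ = H(e₂, e₁) - H(e₁, e₂)`
and, once the first-order terms `∓ Dφ(p) w / √(2k)` cancel, `∂_k A₃ + ∂_α A₄ = H(w, w⊥) - H(w⊥, w)`.
Both vanish by the symmetry of the second derivative of a `C²` function.
-/

open Real

theorem HasDerivAt.fderiv_apply {E F : Type*} [NormedAddCommGroup E] [NormedSpace ℝ E]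
    [NormedAddCommGroup F] [NormedSpace ℝ F] {f : E → F} {γ v : ℝ → E} {γ' v' : E} {t : ℝ}
    (hγ : HasDerivAt γ γ' t) (hf : DifferentiableAt ℝ (fderiv ℝ f) (γ t))
    (hv : HasDerivAt v v' t) :
    HasDerivAt (fun s => fderiv ℝ f (γ s) (v s))
      (fderiv ℝ (fderiv ℝ f) (γ t) γ' (v t) + fderiv ℝ f (γ t) v') t :=
  (hf.hasFDerivAt.comp_hasDerivAt t hγ).clm_apply hv

theorem ContinuousLinearMap.apply_prodMk {R M : Type*} [Semiring R] [TopologicalSpace R]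
    [AddCommMonoid M] [TopologicalSpace M] [Module R M] (L : R × R →L[R] M) (a b : R) :
    L (a, b) = a • L (1, 0) + b • L (0, 1) := by
  rw [← map_smul, ← map_smul, ← map_add]
  simp

theorem hasDerivAt_sqrt_two_mul {k : ℝ} (hk : 0 < k) :
    HasDerivAt (fun s => √(2 * s)) (√(2 * k))⁻¹ k :=
  (((hasDerivAt_id' k).const_mul 2).sqrt (by positivity)).congr_deriv (by field_simp)

noncomputable def gyroPoint (x₁ x₂ ρ α : ℝ) : ℝ × ℝ := (x₁ - ρ * sin α, x₂ + ρ * cos α)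

section gyroPoint

variable {φ : ℝ × ℝ → ℝ} {x₁ x₂ ρ α k : ℝ}

theorem hasDerivAt_gyroPoint_radius :
    HasDerivAt (fun r => gyroPoint x₁ x₂ r α) (-sin α, cos α) ρ := by
  unfold gyroPoint
  convert (((hasDerivAt_id' ρ).mul_const (sin α)).const_sub x₁).prodMk
    (((hasDerivAt_id' ρ).mul_const (cos α)).const_add x₂) using 1
  simp

theorem hasDerivAt_gyroPoint_angle :
    HasDerivAt (fun s => gyroPoint x₁ x₂ ρ s) (ρ • (-cos α, -sin α)) α := by
  unfold gyroPoint
  convert (((hasDerivAt_sin α).const_mul ρ).const_sub x₁).prodMk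
    (((hasDerivAt_cos α).const_mul ρ).const_add x₂) using 1
  simp

theorem ContDiffAt.isSymmSndFDerivAt_two {x : ℝ × ℝ} (hφ : ContDiffAt ℝ 2 φ x) :
    IsSymmSndFDerivAt ℝ φ x :=
  hφ.isSymmSndFDerivAt (by simp [minSmoothness_of_isRCLikeNormedField])

theorem divergence_translation_part_eq_zero (hφ : ContDiffAt ℝ 2 φ (gyroPoint x₁ x₂ ρ α)) :
    deriv (fun s => -fderiv ℝ φ (gyroPoint s x₂ ρ α) (0, 1)) x₁ +
      deriv (fun s => fderiv ℝ φ (gyroPoint x₁ s ρ α) (1, 0)) x₂ = 0 := by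
  have hD : DifferentiableAt ℝ (fderiv ℝ φ) (gyroPoint x₁ x₂ ρ α) :=
    (hφ.fderiv_right (m := 1) le_rfl).differentiableAt one_ne_zero
  have h₁ : HasDerivAt (fun s => gyroPoint s x₂ ρ α) (1, 0) x₁ :=
    ((hasDerivAt_id x₁).sub_const _).prodMk (hasDerivAt_const _ _)
  have h₂ : HasDerivAt (fun s => gyroPoint x₁ s ρ α) (0, 1) x₂ :=
    (hasDerivAt_const _ _).prodMk ((hasDerivAt_id x₂).add_const _)
  rw [(h₁.fderiv_apply hD (hasDerivAt_const _ _)).fun_neg.deriv,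
    (h₂.fderiv_apply hD (hasDerivAt_const _ _)).deriv,
    hφ.isSymmSndFDerivAt_two.eq (1, 0) (0, 1)]
  simp

theorem divergence_gyration_part_eq_zero (hφ : ContDiffAt ℝ 2 φ (gyroPoint x₁ x₂ √(2 * k) α))
    (hk : 0 < k) :
    deriv (fun s => -√(2 * s) * fderiv ℝ φ (gyroPoint x₁ x₂ √(2 * s) α) (cos α, sin α)) k +
      deriv (fun s => -fderiv ℝ φ (gyroPoint x₁ x₂ √(2 * k) s) (-sin s, cos s) / √(2 * k)) α
      = 0 := by
  have hρ : 0 < √(2 * k) := by positivity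
  have hD : DifferentiableAt ℝ (fderiv ℝ φ) (gyroPoint x₁ x₂ √(2 * k) α) :=
    (hφ.fderiv_right (m := 1) le_rfl).differentiableAt one_ne_zero
  have hρ' := hasDerivAt_sqrt_two_mul hk
  have hγ : HasDerivAt (fun s => gyroPoint x₁ x₂ √(2 * s) α)
      ((√(2 * k))⁻¹ • (-sin α, cos α)) k :=
    hasDerivAt_gyroPoint_radius.scomp k hρ'
  have hw : HasDerivAt (fun s => (-sin s, cos s)) (-cos α, -sin α) α :=
    (hasDerivAt_sin α).neg.prodMk (hasDerivAt_cos α)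
  rw [(hρ'.fun_neg.fun_mul (hγ.fderiv_apply hD (hasDerivAt_const _ _))).deriv,
    ((hasDerivAt_gyroPoint_angle.fderiv_apply hD hw).fun_neg.div_const (√(2 * k))).deriv]
  have hneg : ((-cos α, -sin α) : ℝ × ℝ) = -(cos α, sin α) := rfl
  simp only [map_smul, map_neg, smul_apply, neg_apply, map_zero, add_zero, smul_eq_mul, hneg,
    hφ.isSymmSndFDerivAt_two.eq (cos α, sin α) (-sin α, cos α)]
  field_simp
  ring

end gyroPoint

theorem stmt9 (φt : ℝ × ℝ → ℝ) (E : ℝ × ℝ → ℝ × ℝ)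
    (hφ : ContDiff ℝ 2 φt)
    (hE : ∀ p : ℝ × ℝ, E p = (-(fderiv ℝ φt p (1, 0)), -(fderiv ℝ φt p (0, 1))))
    (A₁ A₂ A₃ A₄ : ℝ → ℝ → ℝ → ℝ → ℝ)
    (hA₁ : ∀ x₁ x₂ k α, A₁ x₁ x₂ k α =
      (E (x₁ - Real.sqrt (2 * k) * Real.sin α, x₂ + Real.sqrt (2 * k) * Real.cos α)).2)
    (hA₂ : ∀ x₁ x₂ k α, A₂ x₁ x₂ k α =
      -(E (x₁ - Real.sqrt (2 * k) * Real.sin α, x₂ + Real.sqrt (2 * k) * Real.cos α)).1)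
    (hA₃ : ∀ x₁ x₂ k α, A₃ x₁ x₂ k α =
      Real.sqrt (2 * k) *
        ((E (x₁ - Real.sqrt (2 * k) * Real.sin α, x₂ + Real.sqrt (2 * k) * Real.cos α)).1 * Real.cos α +
         (E (x₁ - Real.sqrt (2 * k) * Real.sin α, x₂ + Real.sqrt (2 * k) * Real.cos α)).2 * Real.sin α))
    (hA₄ : ∀ x₁ x₂ k α, A₄ x₁ x₂ k α =
      ((E (x₁ - Real.sqrt (2 * k) * Real.sin α, x₂ + Real.sqrt (2 * k) * Real.cos α)).2 * Real.cos α -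
       (E (x₁ - Real.sqrt (2 * k) * Real.sin α, x₂ + Real.sqrt (2 * k) * Real.cos α)).1 * Real.sin α) /
      Real.sqrt (2 * k)) :
    ∀ (x₁ x₂ k α : ℝ), 0 < k →
      deriv (fun s => A₁ s x₂ k α) x₁ + deriv (fun s => A₂ x₁ s k α) x₂ +
      deriv (fun s => A₃ x₁ x₂ s α) k + deriv (fun s => A₄ x₁ x₂ k s) α = 0 := by
  intro x₁ x₂ k α hk
  have e₁ : ∀ x₁ x₂ k α, A₁ x₁ x₂ k α = -fderiv ℝ φt (gyroPoint x₁ x₂ √(2 * k) α) (0, 1) := by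
    simp [hA₁, hE, gyroPoint]
  have e₂ : ∀ x₁ x₂ k α, A₂ x₁ x₂ k α = fderiv ℝ φt (gyroPoint x₁ x₂ √(2 * k) α) (1, 0) := by
    simp [hA₂, hE, gyroPoint]
  have e₃ : ∀ x₁ x₂ k α, A₃ x₁ x₂ k α =
      -√(2 * k) * fderiv ℝ φt (gyroPoint x₁ x₂ √(2 * k) α) (cos α, sin α) := by
    intro x₁ x₂ k α
    rw [hA₃, hE, ContinuousLinearMap.apply_prodMk _ (cos α)]
    simp only [gyroPoint, smul_eq_mul]
    ring
  have e₄ : ∀ x₁ x₂ k α, A₄ x₁ x₂ k α =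
      -fderiv ℝ φt (gyroPoint x₁ x₂ √(2 * k) α) (-sin α, cos α) / √(2 * k) := by
    intro x₁ x₂ k α
    rw [hA₄, hE, ContinuousLinearMap.apply_prodMk _ (-sin α)]
    simp only [gyroPoint, smul_eq_mul]
    ring
  simp only [e₁, e₂, e₃, e₄]
  rw [divergence_translation_part_eq_zero hφ.contDiffAt, zero_add,
    divergence_gyration_part_eq_zero hφ.contDiffAt hk]
end

section
/- Suppose (X̃, Ṽ) solve the characteristic system X̃' = (1/ε)Ṽ, Ṽ' = Ẽ(X̃, t) + (1/ε)(Ṽ₂, −Ṽ₁) with Ẽ = −∇φ̃ for a C¹ potential φ̃(·, t). Define the canonical gyrokinetic characteristics X₁ = X̃₁ + Ṽ₂, X₂ = X̃₂ − Ṽ₁, K = |Ṽ|²/2, and A by Ṽ = √(2K)(cos A, sin A) (assuming Ṽ never vanishes and A is a smooth lift). Then with H_ε(x₁,x₂,k,α,t) = k/ε + φ̃(x₁ − √(2k) sin α, x₂ + √(2k) cos α, t), the curves satisfy Hamilton's equations X₁' = −∂_{x₂}H_ε, X₂' = ∂_{x₁}H_ε, K' = ∂_α H_ε, A' = −∂_k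 H_ε, all evaluated at (X₁, X₂, K, A, t). -/
/-!
In the gyrocentre variables the particle sits at `gyroPosition x₁ x₂ k α = X`, so every partial
derivative of `H_ε` is a chain-rule expression in `∇φ̃(X) = -Ẽ(X)`. Comparing with the
characteristic system, the `1/ε` Lorentz terms cancel in `(X₁, X₂)'` and in `K' = Ṽ · Ẽ`. For the
gyrophase, `A` is locally `A t + arctan` of the tangent of the angle between `Ṽ(s)` and `Ṽ(t)`,
which gives `A' = (Ṽ₁ Ṽ₂' - Ṽ₂ Ṽ₁') / |Ṽ|²`, and `Ṽ₁ Ṽ₂' - Ṽ₂ Ṽ₁' = Ṽ₁ Ẽ₂ - Ṽ₂ Ẽ₁ - 2K/ε`.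
-/

open Real Filter Topology

lemma ContinuousLinearMap.apply_prod_eq (L : ℝ × ℝ →L[ℝ] ℝ) (a b : ℝ) :
    L (a, b) = a * L (1, 0) + b * L (0, 1) := by
  have h : ((a, b) : ℝ × ℝ) = a • ((1 : ℝ), (0 : ℝ)) + b • ((0 : ℝ), (1 : ℝ)) := by simp
  rw [h, map_add, map_smul, map_smul, smul_eq_mul, smul_eq_mul]

noncomputable def gyroPosition (x₁ x₂ k α : ℝ) : ℝ × ℝ :=
  (x₁ - √(2 * k) * sin α, x₂ + √(2 * k) * cos α)

noncomputable def gyroHamiltonian (ε : ℝ) (φ : ℝ × ℝ → ℝ) (x₁ x₂ k α : ℝ) : ℝ :=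
  k / ε + φ (gyroPosition x₁ x₂ k α)

section
variable {ε : ℝ} {φ : ℝ × ℝ → ℝ} {x₁ x₂ k α : ℝ}

lemma hasDerivAt_gyroHamiltonian_x₁ (hφ : DifferentiableAt ℝ φ (gyroPosition x₁ x₂ k α)) :
    HasDerivAt (fun y => gyroHamiltonian ε φ y x₂ k α)
      (fderiv ℝ φ (gyroPosition x₁ x₂ k α) (1, 0)) x₁ := by
  have hγ : HasDerivAt (fun y => gyroPosition y x₂ k α) (1, 0) x₁ :=
    ((hasDerivAt_id x₁).sub_const _).prodMk (hasDerivAt_const _ _)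
  exact (hφ.hasFDerivAt.comp_hasDerivAt x₁ hγ).const_add (k / ε)

lemma hasDerivAt_gyroHamiltonian_x₂ (hφ : DifferentiableAt ℝ φ (gyroPosition x₁ x₂ k α)) :
    HasDerivAt (fun y => gyroHamiltonian ε φ x₁ y k α)
      (fderiv ℝ φ (gyroPosition x₁ x₂ k α) (0, 1)) x₂ := by
  have hγ : HasDerivAt (fun y => gyroPosition x₁ y k α) (0, 1) x₂ :=
    (hasDerivAt_const _ _).prodMk ((hasDerivAt_id x₂).add_const _)
  exact (hφ.hasFDerivAt.comp_hasDerivAt x₂ hγ).const_add (k / ε)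

lemma hasDerivAt_gyroHamiltonian_α (hφ : DifferentiableAt ℝ φ (gyroPosition x₁ x₂ k α)) :
    HasDerivAt (fun β => gyroHamiltonian ε φ x₁ x₂ k β)
      (fderiv ℝ φ (gyroPosition x₁ x₂ k α) (-(√(2 * k) * cos α), -(√(2 * k) * sin α))) α := by
  have hγ : HasDerivAt (fun β => gyroPosition x₁ x₂ k β)
      (-(√(2 * k) * cos α), -(√(2 * k) * sin α)) α := by
    refine (((hasDerivAt_sin α).const_mul _).const_sub _).prodMk ?_
    simpa using ((hasDerivAt_cos α).const_mul (√(2 * k))).const_add x₂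
  exact (hφ.hasFDerivAt.comp_hasDerivAt α hγ).const_add (k / ε)

lemma hasDerivAt_gyroHamiltonian_k (hφ : DifferentiableAt ℝ φ (gyroPosition x₁ x₂ k α))
    (hk : 0 < k) :
    HasDerivAt (fun κ => gyroHamiltonian ε φ x₁ x₂ κ α)
      (1 / ε + fderiv ℝ φ (gyroPosition x₁ x₂ k α) (-(sin α / √(2 * k)), cos α / √(2 * k))) k := by
  have hr : HasDerivAt (fun κ => √(2 * κ)) (1 / √(2 * k)) k := by
    convert ((hasDerivAt_id' k).const_mul 2).sqrt (by positivity) using 1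
    field_simp
  have hγ : HasDerivAt (fun κ => gyroPosition x₁ x₂ κ α)
      (-(sin α / √(2 * k)), cos α / √(2 * k)) k := by
    refine HasDerivAt.prodMk ?_ ?_
    · convert (hr.mul_const (sin α)).const_sub x₁ using 1
      ring
    · convert (hr.mul_const (cos α)).const_add x₂ using 1
      ring
  exact ((hasDerivAt_id k).div_const ε).add (hφ.hasFDerivAt.comp_hasDerivAt k hγ)

end

lemma hasDerivAt_polar_angle {r A V₁ V₂ : ℝ → ℝ} {t V₁' V₂' : ℝ}
    (hA : ContinuousAt A t) (hr : r t ≠ 0)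
    (h₁ : ∀ s, V₁ s = r s * cos (A s)) (h₂ : ∀ s, V₂ s = r s * sin (A s))
    (hV₁ : HasDerivAt V₁ V₁' t) (hV₂ : HasDerivAt V₂ V₂' t) :
    HasDerivAt A ((V₁ t * V₂' - V₂ t * V₁') / r t ^ 2) t := by
  -- rotating by `-A t`, the vector `V s` has angle `A s - A t`, whose tangent is `N s / D s`
  set N := fun s => V₂ s * cos (A t) - V₁ s * sin (A t)
  set D := fun s => V₁ s * cos (A t) + V₂ s * sin (A t)
  have hN : ∀ s, N s = r s * sin (A s - A t) := fun s => by
    simp only [N, h₁, h₂, sin_sub]; ring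
  have hD : ∀ s, D s = r s * cos (A s - A t) := fun s => by
    simp only [D, h₁, h₂, cos_sub]; ring
  have hDt : D t = r t := by rw [hD, sub_self, cos_zero, mul_one]
  have hNt : N t = 0 := by rw [hN, sub_self, sin_zero, mul_zero]
  have hN' : HasDerivAt N (V₂' * cos (A t) - V₁' * sin (A t)) t :=
    (hV₂.mul_const _).sub (hV₁.mul_const _)
  have hD' : HasDerivAt D (V₁' * cos (A t) + V₂' * sin (A t)) t :=
    (hV₁.mul_const _).add (hV₂.mul_const _)
  have hA_near : ∀ᶠ s in 𝓝 t, |A s - A t| < π / 2 :=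
    ((hA.sub continuousAt_const).abs).eventually_lt continuousAt_const (by simpa using pi_pos)
  have hD_ne : ∀ᶠ s in 𝓝 t, D s ≠ 0 := hD'.continuousAt.eventually_ne (hDt ▸ hr)
  have hA_eq : A =ᶠ[𝓝 t] fun s => A t + arctan (N s / D s) := by
    filter_upwards [hA_near, hD_ne] with s hs hDs
    have hrs : r s ≠ 0 := fun h => hDs (by rw [hD, h, zero_mul])
    obtain ⟨hlo, hhi⟩ := abs_lt.1 hs
    rw [hN, hD, mul_div_mul_left _ _ hrs, ← tan_eq_sin_div_cos, arctan_tan hlo hhi]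
    ring
  have h := ((hasDerivAt_arctan _).comp t (hN'.div hD' (hDt ▸ hr))).const_add (A t)
  refine (h.congr_of_eventuallyEq hA_eq).congr_deriv ?_
  rw [Pi.div_apply, hNt, hDt, h₁ t, h₂ t]
  field_simp
  ring

theorem stmt11_general (ε : ℝ)
    (φt : ℝ × ℝ → ℝ → ℝ) (hφ : ∀ t, ContDiff ℝ 1 (fun p => φt p t))
    (E₁ E₂ : ℝ × ℝ → ℝ → ℝ)
    (hE₁ : ∀ p t, E₁ p t = -(fderiv ℝ (fun q => φt q t) p (1, 0)))
    (hE₂ : ∀ p t, E₂ p t = -(fderiv ℝ (fun q => φt q t) p (0, 1)))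
    -- the Hamiltonian H_ε
    (H : ℝ → ℝ → ℝ → ℝ → ℝ → ℝ)
    (hH : ∀ x₁ x₂ k α t, H x₁ x₂ k α t = k / ε +
      φt (x₁ - Real.sqrt (2 * k) * Real.sin α, x₂ + Real.sqrt (2 * k) * Real.cos α) t)
    -- the characteristics of the scaled Vlasov equation
    (X₁ X₂ V₁ V₂ : ℝ → ℝ)
    (hX₁ : ∀ t, HasDerivAt X₁ ((1 / ε) * V₁ t) t)
    (hX₂ : ∀ t, HasDerivAt X₂ ((1 / ε) * V₂ t) t)
    (hV₁ : ∀ t, HasDerivAt V₁ (E₁ (X₁ t, X₂ t) t + (1 / ε) * V₂ t) t)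
    (hV₂ : ∀ t, HasDerivAt V₂ (E₂ (X₁ t, X₂ t) t - (1 / ε) * V₁ t) t)
    (hVne : ∀ t, V₁ t ^ 2 + V₂ t ^ 2 > 0)
    -- the canonical gyrokinetic characteristics
    (K : ℝ → ℝ) (hK : ∀ t, K t = (V₁ t ^ 2 + V₂ t ^ 2) / 2)
    (A : ℝ → ℝ) (hAcont : Continuous A)
    (hA₁ : ∀ t, V₁ t = Real.sqrt (2 * K t) * Real.cos (A t))
    (hA₂ : ∀ t, V₂ t = Real.sqrt (2 * K t) * Real.sin (A t)) :
    (∀ t, HasDerivAt (fun s => X₁ s + V₂ s)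
      (-(deriv (fun y => H (X₁ t + V₂ t) y (K t) (A t) t) (X₂ t - V₁ t))) t) ∧
    (∀ t, HasDerivAt (fun s => X₂ s - V₁ s)
      (deriv (fun y => H y (X₂ t - V₁ t) (K t) (A t) t) (X₁ t + V₂ t)) t) ∧
    (∀ t, HasDerivAt K
      (deriv (fun β => H (X₁ t + V₂ t) (X₂ t - V₁ t) (K t) β t) (A t)) t) ∧
    (∀ t, HasDerivAt A
      (-(deriv (fun κ => H (X₁ t + V₂ t) (X₂ t - V₁ t) κ (A t) t) (K t))) t) := by
  have hH_eq : ∀ x₁ x₂ k α t, H x₁ x₂ k α t = gyroHamiltonian ε (φt · t) x₁ x₂ k α := hH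
  have hK_pos : ∀ t, 0 < K t := fun t => by rw [hK t]; linarith [hVne t]
  have hpos : ∀ t, gyroPosition (X₁ t + V₂ t) (X₂ t - V₁ t) (K t) (A t) = (X₁ t, X₂ t) :=
    fun t => by rw [gyroPosition, ← hA₁, ← hA₂, add_sub_cancel_right, sub_add_cancel]
  have hE₁' : ∀ p t, fderiv ℝ (φt · t) p (1, 0) = -E₁ p t := fun p t => by rw [hE₁, neg_neg]
  have hE₂' : ∀ p t, fderiv ℝ (φt · t) p (0, 1) = -E₂ p t := fun p t => by rw [hE₂, neg_neg]
  have hdiff : ∀ t, DifferentiableAt ℝ (φt · t)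
      (gyroPosition (X₁ t + V₂ t) (X₂ t - V₁ t) (K t) (A t)) :=
    fun t => ((hφ t).differentiable one_ne_zero).differentiableAt
  have hK' : ∀ t, HasDerivAt K (V₁ t * E₁ (X₁ t, X₂ t) t + V₂ t * E₂ (X₁ t, X₂ t) t) t := fun t => by
    rw [show K = fun s => (V₁ s ^ 2 + V₂ s ^ 2) / 2 from funext hK]
    refine ((((hV₁ t).fun_pow 2).fun_add ((hV₂ t).fun_pow 2)).div_const 2).congr_deriv ?_
    push_cast
    ring
  simp only [hH_eq]
  refine ⟨fun t => ?_, fun t => ?_, fun t => ?_, fun t => ?_⟩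
  · rw [(hasDerivAt_gyroHamiltonian_x₂ (hdiff t)).deriv, hpos, hE₂']
    exact ((hX₁ t).fun_add (hV₂ t)).congr_deriv (by ring)
  · rw [(hasDerivAt_gyroHamiltonian_x₁ (hdiff t)).deriv, hpos, hE₁']
    exact ((hX₂ t).fun_sub (hV₁ t)).congr_deriv (by ring)
  · rw [(hasDerivAt_gyroHamiltonian_α (hdiff t)).deriv, hpos, ← hA₁, ← hA₂,
      ContinuousLinearMap.apply_prod_eq, hE₁', hE₂']
    exact (hK' t).congr_deriv (by ring)
  · rw [(hasDerivAt_gyroHamiltonian_k (hdiff t) (hK_pos t)).deriv, hpos,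
      ContinuousLinearMap.apply_prod_eq, hE₁', hE₂']
    have hr : 0 < √(2 * K t) := sqrt_pos.2 (by linarith [hK_pos t])
    refine (hasDerivAt_polar_angle (r := fun s => √(2 * K s)) hAcont.continuousAt hr.ne'
      hA₁ hA₂ (hV₁ t) (hV₂ t)).congr_deriv ?_
    rw [hA₁, hA₂]
    field_simp
    linear_combination -(√(2 * K t) * ε⁻¹) * sin_sq_add_cos_sq (A t)

theorem stmt11 (ε : ℝ) (hε : 0 < ε)
    (φt : ℝ × ℝ → ℝ → ℝ) (hφ : ∀ t, ContDiff ℝ 1 (fun p => φt p t))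
    (E₁ E₂ : ℝ × ℝ → ℝ → ℝ)
    (hE₁ : ∀ p t, E₁ p t = -(fderiv ℝ (fun q => φt q t) p (1, 0)))
    (hE₂ : ∀ p t, E₂ p t = -(fderiv ℝ (fun q => φt q t) p (0, 1)))
    -- the Hamiltonian H_ε
    (H : ℝ → ℝ → ℝ → ℝ → ℝ → ℝ)
    (hH : ∀ x₁ x₂ k α t, H x₁ x₂ k α t = k / ε +
      φt (x₁ - Real.sqrt (2 * k) * Real.sin α, x₂ + Real.sqrt (2 * k) * Real.cos α) t)
    -- the characteristics of the scaled Vlasov equation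
    (X₁ X₂ V₁ V₂ : ℝ → ℝ)
    (hX₁ : ∀ t, HasDerivAt X₁ ((1 / ε) * V₁ t) t)
    (hX₂ : ∀ t, HasDerivAt X₂ ((1 / ε) * V₂ t) t)
    (hV₁ : ∀ t, HasDerivAt V₁ (E₁ (X₁ t, X₂ t) t + (1 / ε) * V₂ t) t)
    (hV₂ : ∀ t, HasDerivAt V₂ (E₂ (X₁ t, X₂ t) t - (1 / ε) * V₁ t) t)
    (hVne : ∀ t, V₁ t ^ 2 + V₂ t ^ 2 > 0)
    -- the canonical gyrokinetic characteristics
    (K : ℝ → ℝ) (hK : ∀ t, K t = (V₁ t ^ 2 + V₂ t ^ 2) / 2)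
    (A : ℝ → ℝ) (hAcont : Continuous A)
    (hA₁ : ∀ t, V₁ t = Real.sqrt (2 * K t) * Real.cos (A t))
    (hA₂ : ∀ t, V₂ t = Real.sqrt (2 * K t) * Real.sin (A t)) :
    (∀ t, HasDerivAt (fun s => X₁ s + V₂ s)
      (-(deriv (fun y => H (X₁ t + V₂ t) y (K t) (A t) t) (X₂ t - V₁ t))) t) ∧
    (∀ t, HasDerivAt (fun s => X₂ s - V₁ s)
      (deriv (fun y => H y (X₂ t - V₁ t) (K t) (A t) t) (X₁ t + V₂ t)) t) ∧
    (∀ t, HasDerivAt K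
      (deriv (fun β => H (X₁ t + V₂ t) (X₂ t - V₁ t) (K t) β t) (A t)) t) ∧
    (∀ t, HasDerivAt A
      (-(deriv (fun κ => H (X₁ t + V₂ t) (X₂ t - V₁ t) κ (A t) t) (K t))) t) :=
  stmt11_general ε φt hφ E₁ E₂ hE₁ hE₂ H hH X₁ X₂ V₁ V₂ hX₁ hX₂ hV₁ hV₂ hVne K hK A hAcont hA₁ hA₂
end
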